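/- arXiv:2203.17052 — 4 statements merged into one kernel-verified Lean document; each statement's English description precedes it below -/
import Mathlib

section
/- Let h > 0 and λ > 0, and let u_j = r^j u_0 with r = 1 + h²λ/2 − h√(λ + h²λ²/4) be the decaying solution of the finite-difference scheme. Define b by the boundary relation 2h⁻¹[h⁻¹(u_1 − u_0) + b] = λ u_0. Then b = √(λ + h²λ²/4) · u_0. -/
/-- the boundary relation 2h⁻¹[h⁻¹(u₁ − u₀) + b] = λu₀ for the
decaying solution u_j = r^j u₀ forces b = √(λ + h²λ²/4)·u₀. -/
theorem stmt5 (h lam : ℝ) (hh : 0 < h) (hlam : 0 < lam) (u0 : ℝ)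
    (r : ℝ) (hr : r = 1 + h ^ 2 * lam / 2 - h * Real.sqrt (lam + h ^ 2 * lam ^ 2 / 4))
    (u : ℕ → ℝ) (hu : ∀ j, u j = r ^ j * u0)
    (b : ℝ) (hb : 2 * h⁻¹ * (h⁻¹ * (u 1 - u 0) + b) = lam * u 0) :
    b = Real.sqrt (lam + h ^ 2 * lam ^ 2 / 4) * u0 := by
  have h0 := hu 0
  have h1 := hu 1
  simp at h0 h1
  set s := Real.sqrt (lam + h ^ 2 * lam ^ 2 / 4) with hs
  rw [h0, h1, hr] at hb
  have hne : h ≠ 0 := ne_of_gt hh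
  field_simp at hb
  nlinarith [hb, sq_nonneg h]
end

section
/- Let T > 0 and c < 0. The function h(z) = i z cos(Tz) + √(z² + c) · sin(Tz) (where √(z²+c) is purely imaginary for 0 < z < √(−c)) has at least one root in each interval I_k = ((k−1)π/T, kπ/T] for each integer k with 1 ≤ k ≤ ⌊T√(−c)/π⌋ that is contained in (0, √(−c)). -/
open Real

/-
On `I_k` write `h z = i g z` with `g z = z cos (T z) + s z sin (T z)` and `s ≥ 0`. At the midpoint
`m = (k - 1/2)π/T` the cosine vanishes and `sin (T m) = -(-1)^k`, at the right end `kπ/T` the sine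
vanishes and `cos = (-1)^k`, so `(-1)^k g` goes from `-s m ≤ 0` to `kπ/T ≥ 0` and `g` has a root
in between by the intermediate value theorem.
-/

theorem exists_mul_cos_add_mul_sin_eq_zero {T : ℝ} (hT : 0 < T) {s : ℝ → ℝ} (hs : Continuous s)
    (hs_nonneg : ∀ z, 0 ≤ s z) (k : ℕ) :
    ∃ z ∈ Set.Icc ((k - 1 / 2) * π / T) (k * π / T), z * cos (T * z) + s z * sin (T * z) = 0 := by
  set g : ℝ → ℝ := fun z => z * cos (T * z) + s z * sin (T * z)
  set m := (k - 1 / 2) * π / T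
  set b := k * π / T
  have hmb : m ≤ b := by dsimp only [m, b]; gcongr; linarith
  have hb : 0 ≤ b := by dsimp only [b]; positivity
  have hTm : T * m = k * π - π / 2 := by dsimp only [m]; field_simp
  have hTb : T * b = k * π := by dsimp only [b]; field_simp
  have hgm : g m = -((-1) ^ k * s m) := by
    simp only [g, hTm, cos_nat_mul_pi_sub, sin_nat_mul_pi_sub, cos_pi_div_two, sin_pi_div_two]
    ring
  have hgb : g b = (-1) ^ k * b := by
    simp only [g, hTb, sin_nat_mul_pi, cos_nat_mul_pi]
    ring
  have hzero : (0 : ℝ) ∈ Set.uIcc (g m) (g b) := by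
    have hsm := hs_nonneg m
    rw [hgm, hgb, Set.mem_uIcc]
    rcases neg_one_pow_eq_or ℝ k with hk | hk <;> rw [hk]
    · left; constructor <;> linarith
    · right; constructor <;> linarith
  have hg : Continuous g := by fun_prop
  obtain ⟨z, hz, hgz⟩ := intermediate_value_uIcc hg.continuousOn hzero
  exact ⟨z, Set.uIcc_of_le hmb ▸ hz, hgz⟩

theorem stmt10_general (T c : ℝ) (hT : 0 < T)
    (h : ℝ → ℂ)
    (hdef : ∀ z : ℝ, h z = Complex.I * (z : ℂ) * Complex.cos (T * z)
      + Complex.I * (Real.sqrt (-z ^ 2 - c) : ℂ) * Complex.sin (T * z))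
    (k : ℕ) :
    ∃ z ∈ Set.Ioc (((k : ℝ) - 1) * π / T) ((k : ℝ) * π / T), h z = 0 := by
  obtain ⟨z, ⟨hmz, hzb⟩, hgz⟩ := exists_mul_cos_add_mul_sin_eq_zero hT
    (s := fun z => √(-z ^ 2 - c)) (by fun_prop) (fun _ => sqrt_nonneg _) k
  have hleft : ((k : ℝ) - 1) * π / T < z :=
    lt_of_lt_of_le (by gcongr; linarith) hmz
  refine ⟨z, ⟨hleft, hzb⟩, ?_⟩
  have hhz : h z = Complex.I * ((z * cos (T * z) + √(-z ^ 2 - c) * sin (T * z) : ℝ) : ℂ) := by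
    rw [hdef z]
    push_cast
    ring
  rw [hhz, hgz, Complex.ofReal_zero, mul_zero]

/-- for T > 0 and c < 0, the function
h(z) = i z cos(Tz) + √(z²+c) sin(Tz), with √(z²+c) = i√(−z²−c) purely imaginary on
0 < z < √(−c), has at least one root in each interval I_k = ((k−1)π/T, kπ/T]
contained in (0, √(−c)), for 1 ≤ k ≤ ⌊T√(−c)/π⌋. -/
theorem stmt10 (T c : ℝ) (hT : 0 < T) (hc : c < 0)
    (h : ℝ → ℂ)
    (hdef : ∀ z : ℝ, h z = Complex.I * (z : ℂ) * Complex.cos (T * z)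
      + Complex.I * (Real.sqrt (-z ^ 2 - c) : ℂ) * Complex.sin (T * z))
    (k : ℕ) (hk1 : 1 ≤ k) (hk2 : k ≤ ⌊T * Real.sqrt (-c) / π⌋₊)
    (hsub : Set.Ioc (((k : ℝ) - 1) * π / T) ((k : ℝ) * π / T)
      ⊆ Set.Ioo 0 (Real.sqrt (-c))) :
    ∃ z ∈ Set.Ioc (((k : ℝ) - 1) * π / T) ((k : ℝ) * π / T), h z = 0 :=
  stmt10_general T c hT h hdef k
end

section
/- Under the assumptions of the two-layer construction (T > 0, c ∈ ℝ, λ > max{0,−c}), the solution u satisfies the Dirichlet-to-Neumann relation −u'(0) = f(λ)·u(0), where f(λ) = √(λ+c) · (√(λ+c) sinh(T√(λ+c)) + √λ cosh(T√(λ+c))) / (√(λ+c) cosh(T√(λ+c)) + √λ sinh(T√(λ+c))). -/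
/-!
Near `0` the solution is `α e^{x√(λ+c)} + (u₀ - α) e^{-x√(λ+c)}`, so `-u'(0) = (u₀ - 2α)√(λ+c)`.
Clearing the denominator `D = √(λ+c) cosh(T√(λ+c)) + √λ sinh(T√(λ+c))` in the formula for `α`
and using `cosh t - e^{-t} = sinh t`, `sinh t + e^{-t} = cosh t` turns `u₀ - 2α` into
`u₀ (√(λ+c) sinh(T√(λ+c)) + √λ cosh(T√(λ+c))) / D`.
-/

open Real Filter Topology

theorem hasDerivAt_exp_mul_add_exp_neg_mul (a b s x : ℝ) :
    HasDerivAt (fun y => a * exp (y * s) + b * exp (-y * s))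
      ((a * exp (x * s) - b * exp (-x * s)) * s) x := by
  have hplus := (hasDerivAt_mul_const (x := x) s).exp
  have hminus := ((hasDerivAt_neg x).mul_const s).exp
  refine ((hplus.const_mul a).add (hminus.const_mul b)).congr_deriv ?_
  ring

theorem deriv_exp_mul_add_exp_neg_mul_zero (a b s : ℝ) :
    deriv (fun y => a * exp (y * s) + b * exp (-y * s)) 0 = (a - b) * s := by
  rw [(hasDerivAt_exp_mul_add_exp_neg_mul a b s 0).deriv]
  simp

theorem mul_cosh_add_mul_sinh_pos {s l t : ℝ} (hs : 0 < s) (hl : 0 ≤ l) (ht : 0 ≤ t) :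
    0 < s * cosh t + l * sinh t := by
  have := sinh_nonneg_iff.mpr ht
  have := cosh_pos t
  positivity

theorem sub_two_mul_reflection_coeff {s l t : ℝ} (hD : s * cosh t + l * sinh t ≠ 0) (u0 : ℝ) :
    u0 - 2 * (u0 / 2 * ((s - l) * exp (-t)) / (s * cosh t + l * sinh t)) =
      (s * sinh t + l * cosh t) / (s * cosh t + l * sinh t) * u0 := by
  rw [← cosh_sub_sinh]
  field_simp
  ring

theorem stmt16_general (T c lam u0 : ℝ) (hT : 0 < T) (hlam : max 0 (-c) < lam)
    (sc sl : ℝ) (hsc : sc = Real.sqrt (lam + c)) (hsl : sl = Real.sqrt lam)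
    (α : ℝ)
    (hα : α = u0 / 2 * ((sc - sl) * Real.exp (-T * sc)) /
      (sc * Real.cosh (T * sc) + sl * Real.sinh (T * sc)))
    (β : ℝ)
    (u : ℝ → ℝ)
    (hu : ∀ x, u x = if x ≤ T then α * Real.exp (x * sc) + (u0 - α) * Real.exp (-x * sc)
      else β * Real.exp (-x * sl)) :
    -(deriv u 0) =
      (sc * (sc * Real.sinh (T * sc) + sl * Real.cosh (T * sc)) /
        (sc * Real.cosh (T * sc) + sl * Real.sinh (T * sc))) * u 0 := by
  have hsc_pos : 0 < sc := hsc ▸ sqrt_pos.mpr (by linarith [le_max_right 0 (-c)])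
  have hD := mul_cosh_add_mul_sinh_pos hsc_pos (hsl ▸ sqrt_nonneg lam) (by positivity : 0 ≤ T * sc)
  have hu_zero : u 0 = u0 := by simp [hu 0, hT.le]
  have hu_near_zero :
      u =ᶠ[𝓝 0] fun x => α * exp (x * sc) + (u0 - α) * exp (-x * sc) := by
    filter_upwards [eventually_lt_nhds hT] with x hx
    rw [hu x, if_pos hx.le]
  have hcoeff := sub_two_mul_reflection_coeff hD.ne' u0
  rw [← neg_mul, ← hα] at hcoeff
  rw [hu_near_zero.deriv_eq, deriv_exp_mul_add_exp_neg_mul_zero, hu_zero]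
  linear_combination sc * hcoeff

/-- the two-layer decaying solution satisfies the DtN relation
−u'(0) = f(λ)·u(0) with
f(λ) = √(λ+c)(√(λ+c)sinh(T√(λ+c)) + √λ cosh(T√(λ+c))) /
       (√(λ+c)cosh(T√(λ+c)) + √λ sinh(T√(λ+c))). -/
theorem stmt16 (T c lam u0 : ℝ) (hT : 0 < T) (hlam : max 0 (-c) < lam)
    (sc sl : ℝ) (hsc : sc = Real.sqrt (lam + c)) (hsl : sl = Real.sqrt lam)
    (α : ℝ)
    (hα : α = u0 / 2 * ((sc - sl) * Real.exp (-T * sc)) /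
      (sc * Real.cosh (T * sc) + sl * Real.sinh (T * sc)))
    (β : ℝ)
    (hβ : β = (2 * α * Real.sinh (T * sc) + Real.exp (-T * sc) * u0) * Real.exp (T * sl))
    (u : ℝ → ℝ)
    (hu : ∀ x, u x = if x ≤ T then α * Real.exp (x * sc) + (u0 - α) * Real.exp (-x * sc)
      else β * Real.exp (-x * sl)) :
    -(deriv u 0) =
      (sc * (sc * Real.sinh (T * sc) + sl * Real.cosh (T * sc)) /
        (sc * Real.cosh (T * sc) + sl * Real.sinh (T * sc))) * u 0 :=
  stmt16_general T c lam u0 hT hlam sc sl hsc hsl α hα β u hu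
end

section
/- Let c < 0 and T > 0. Every real zero λ of the denominator g(λ) = √(λ+c) cosh(T√(λ+c)) + √λ sinh(T√(λ+c)) (square roots analytically continued through the upper half-plane) lies in the open interval (0, −c). -/
/-- The branch of the complex square root obtained by analytic continuation
through the upper half-plane, restricted to the real axis:
√x for x ≥ 0 and i√(−x) for x < 0. -/
noncomputable def upperSqrt (x : ℝ) : ℂ :=
  if 0 ≤ x then (Real.sqrt x : ℂ) else Complex.I * (Real.sqrt (-x) : ℂ)

/-- for c < 0 and T > 0, every real zero λ (away from the
ramification points 0 and −c) of
g(λ) = √(λ+c)cosh(T√(λ+c)) + √λ sinh(T√(λ+c)) lies in the open interval (0, −c). -/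
theorem stmt18 (T c : ℝ) (hT : 0 < T) (hc : c < 0)
    (g : ℝ → ℂ)
    (hg : ∀ lam : ℝ, g lam = upperSqrt (lam + c) * Complex.cosh (T * upperSqrt (lam + c))
      + upperSqrt lam * Complex.sinh (T * upperSqrt (lam + c))) :
    ∀ lam : ℝ, lam ≠ 0 → lam ≠ -c → g lam = 0 → lam ∈ Set.Ioo 0 (-c) := by
  intro lam h0 hnc hz
  rw [hg] at hz
  by_contra hmem
  simp only [Set.mem_Ioo, not_and_or, not_lt] at hmem
  rcases hmem with h | h
  · -- lam ≤ 0, hence lam < 0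
    have hlam : lam < 0 := lt_of_le_of_ne h h0
    have hlc : lam + c < 0 := by linarith
    set s := Real.sqrt (-(lam + c)) with hs
    set r := Real.sqrt (-lam) with hr
    have hspos : 0 < s := Real.sqrt_pos.mpr (by linarith)
    have hrpos : 0 < r := Real.sqrt_pos.mpr (by linarith)
    have e1 : upperSqrt (lam + c) = Complex.I * (s : ℂ) := by
      simp [upperSqrt, not_le.mpr hlc, hs]
    have e2 : upperSqrt lam = Complex.I * (r : ℂ) := by
      simp [upperSqrt, not_le.mpr hlam, hr]
    rw [e1, e2] at hz
    have key : Complex.I * (s : ℂ) * Complex.cosh ((T : ℂ) * (Complex.I * (s : ℂ)))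
        + Complex.I * (r : ℂ) * Complex.sinh ((T : ℂ) * (Complex.I * (s : ℂ)))
        = ((-(r * Real.sin (T * s)) : ℝ) : ℂ)
          + ((s * Real.cos (T * s) : ℝ) : ℂ) * Complex.I := by
      have harg : (T : ℂ) * (Complex.I * (s : ℂ)) = ((T * s : ℝ) : ℂ) * Complex.I := by
        push_cast; ring
      rw [harg, Complex.cosh_mul_I, Complex.sinh_mul_I, ← Complex.ofReal_cos,
        ← Complex.ofReal_sin]
      simp only [Complex.ofReal_neg, Complex.ofReal_mul]
      linear_combination (((Real.sin (T * s) : ℂ)) * (r : ℂ)) * Complex.I_sq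
    rw [key] at hz
    have hre : -(r * Real.sin (T * s)) = 0 := by
      have h' := congrArg Complex.re hz
      simpa only [Complex.add_re, Complex.mul_I_re, Complex.ofReal_re, Complex.ofReal_im,
        neg_zero, add_zero, Complex.zero_re] using h'
    have him : s * Real.cos (T * s) = 0 := by
      have h' := congrArg Complex.im hz
      simpa only [Complex.add_im, Complex.mul_I_im, Complex.ofReal_re, Complex.ofReal_im,
        zero_add, Complex.zero_im] using h'
    have hcos : Real.cos (T * s) = 0 := by
      rcases mul_eq_zero.mp him with h' | h'
      · exact absurd h' (ne_of_gt hspos)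
      · exact h'
    have hsin : Real.sin (T * s) = 0 := by
      rcases mul_eq_zero.mp (neg_eq_zero.mp hre) with h' | h'
      · exact absurd h' (ne_of_gt hrpos)
      · exact h'
    have := Real.sin_sq_add_cos_sq (T * s)
    rw [hsin, hcos] at this
    norm_num at this
  · -- -c ≤ lam, hence -c < lam
    have hlam : -c < lam := lt_of_le_of_ne h (Ne.symm hnc)
    have hlc : 0 < lam + c := by linarith
    have hlp : 0 < lam := by linarith
    have e1 : upperSqrt (lam + c) = ((Real.sqrt (lam + c) : ℝ) : ℂ) := by
      simp [upperSqrt, le_of_lt hlc]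
    have e2 : upperSqrt lam = ((Real.sqrt lam : ℝ) : ℂ) := by
      simp [upperSqrt, le_of_lt hlp]
    rw [e1, e2] at hz
    have hz' : ((Real.sqrt (lam + c) * Real.cosh (T * Real.sqrt (lam + c))
        + Real.sqrt lam * Real.sinh (T * Real.sqrt (lam + c)) : ℝ) : ℂ) = 0 := by
      rw [← hz]
      push_cast [Complex.ofReal_cosh, Complex.ofReal_sinh]
      ring
    rw [Complex.ofReal_eq_zero] at hz'
    have h1 : 0 < Real.sqrt (lam + c) * Real.cosh (T * Real.sqrt (lam + c)) :=
      mul_pos (Real.sqrt_pos.mpr hlc) (Real.cosh_pos _)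
    have h2 : 0 < Real.sqrt lam * Real.sinh (T * Real.sqrt (lam + c)) :=
      mul_pos (Real.sqrt_pos.mpr hlp)
        (Real.sinh_pos_iff.mpr (mul_pos hT (Real.sqrt_pos.mpr hlc)))
    linarith
end
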